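/- (Grothendieck's Theorem) Let X be a countably compact completely regular Hausdorff space and A ⊆ Cp(X). Then the closure of A in Cp(X) is compact if and only if A is countably compact in Cp(X). -/

import Mathlib

/-!
If `g` lies in the pointwise closure of `A` but is discontinuous at `x₀`, one builds inductively
`fₙ ∈ A` and points `yₙ` with `g(yₙ)` far from `g(x₀)` such that `fₙ → g` at `x₀` and at every
`yₘ`, while `fₘ(yₙ) → fₘ(x₀)` for every `m`. A cluster point `h ∈ Cp(X)` of `(fₙ)` then agrees
with `g` at `x₀` and at every `yₘ`, and at a cluster point `z` of `(yₙ)` in `X` we get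
`fₘ(z) = fₘ(x₀)` for all `m`, hence `h(z) = h(x₀) = g(x₀)`; but continuity of `h` at `z` keeps
`h(z)` away from `g(x₀)`. So the pointwise closure of `A` consists of continuous functions, and it
is compact by Tychonoff because `A` is pointwise bounded.
-/

open Set Filter Topology

def IsLimitPointOf {Z : Type*} [TopologicalSpace Z] (x : Z) (S : Set Z) : Prop :=
  ∀ U : Set Z, IsOpen U → x ∈ U → (S ∩ U).Infinite

def CountablyCompactIn {Z : Type*} [TopologicalSpace Z] (A B : Set Z) : Prop :=
  ∀ S ⊆ A, S.Infinite → ∃ x ∈ B, IsLimitPointOf x S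

def IsGSpace (Y : Type*) [TopologicalSpace Y] : Prop :=
  ∀ A : Set Y, CountablyCompactIn A Set.univ → IsCompact (closure A)

def IsHereditaryGSpace (Y : Type*) [TopologicalSpace Y] : Prop :=
  ∀ B : Set Y, IsGSpace B

def Cp (X : Type*) [TopologicalSpace X] : Type _ := {f : X → ℝ // Continuous f}

instance (X : Type*) [TopologicalSpace X] : TopologicalSpace (Cp X) :=
  inferInstanceAs (TopologicalSpace {f : X → ℝ // Continuous f})

def CpI (X : Type*) [TopologicalSpace X] : Type _ := {f : X → unitInterval // Continuous f}

instance (X : Type*) [TopologicalSpace X] : TopologicalSpace (CpI X) :=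
  inferInstanceAs (TopologicalSpace {f : X → unitInterval // Continuous f})

def CountablyTight (X : Type*) [TopologicalSpace X] : Prop :=
  ∀ (A : Set X) (x : X), x ∈ closure A → ∃ B ⊆ A, B.Countable ∧ x ∈ closure B

def CountablyCompactSpace' (Y : Type*) [TopologicalSpace Y] : Prop :=
  ∀ S : Set Y, S.Infinite → ∃ x : Y, IsLimitPointOf x S

def DULC {X : Type*} [TopologicalSpace X] (A : Set (CpI X)) : Prop :=
  ∀ (f : ℕ → CpI X), (∀ n, f n ∈ A) → ∀ (x : ℕ → X) (𝒰 𝒱 : Ultrafilter ℕ),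
    (∃ y : X, Filter.Tendsto x (𝒱 : Filter ℕ) (nhds y)) →
    ∀ (g h : ℕ → unitInterval) (u v : unitInterval),
      (∀ n, Filter.Tendsto (fun m => (f n).1 (x m)) (𝒱 : Filter ℕ) (nhds (g n))) →
      Filter.Tendsto g (𝒰 : Filter ℕ) (nhds u) →
      (∀ m, Filter.Tendsto (fun n => (f n).1 (x m)) (𝒰 : Filter ℕ) (nhds (h m))) →
      Filter.Tendsto h (𝒱 : Filter ℕ) (nhds v) →
      u = v

def DLC {X : Type*} [TopologicalSpace X] (A : Set (CpI X)) : Prop :=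
  ∀ (f : ℕ → CpI X), (∀ n, f n ∈ A) → ∀ (x : ℕ → X),
    ∀ (g h : ℕ → unitInterval) (u v : unitInterval),
      (∀ n, Filter.Tendsto (fun m => (f n).1 (x m)) Filter.atTop (nhds (g n))) →
      Filter.Tendsto g Filter.atTop (nhds u) →
      (∀ m, Filter.Tendsto (fun n => (f n).1 (x m)) Filter.atTop (nhds (h m))) →
      Filter.Tendsto h Filter.atTop (nhds v) →
      u = v

section ClusterPoints

variable {Z : Type*} [TopologicalSpace Z]

theorem MapClusterPt.eq_of_tendsto [T2Space Z] {ι : Type*} {l : Filter ι} {u : ι → Z} {x y : Z}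
    (hx : MapClusterPt x l u) (hu : Tendsto u l (𝓝 y)) : x = y :=
  eq_of_nhds_neBot (hx.neBot.mono (inf_le_inf_left _ hu))

theorem MapClusterPt.isLimitPointOf {u : ℕ → Z} {x : Z} {S : Set Z}
    (hx : MapClusterPt x atTop u) (hu : u.Injective) (huS : ∀ n, u n ∈ S) :
    IsLimitPointOf x S := by
  intro U hU hxU
  have hinf : {n | u n ∈ U}.Infinite :=
    Nat.frequently_atTop_iff_infinite.1 (hx.frequently (hU.mem_nhds hxU))
  refine (hinf.image hu.injOn).mono ?_
  rintro _ ⟨n, hn, rfl⟩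
  exact ⟨huS n, hn⟩

theorem IsLimitPointOf.mapClusterPt {u : ℕ → Z} {x : Z} (hx : IsLimitPointOf x (range u)) :
    MapClusterPt x atTop u := by
  refine mapClusterPt_iff_frequently.2 fun s hs => ?_
  obtain ⟨U, hUs, hU, hxU⟩ := mem_nhds_iff.1 hs
  have hinf : {n | u n ∈ U}.Infinite := by
    refine ((hx U hU hxU).mono ?_).of_image u
    rintro _ ⟨⟨n, rfl⟩, hn⟩
    exact ⟨n, hn, rfl⟩
  exact (Nat.frequently_atTop_iff_infinite.2 hinf).mono fun n hn => hUs hn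

theorem CountablyCompactIn.of_isCompact_closure {A : Set Z} (hA : IsCompact (closure A)) :
    CountablyCompactIn A univ := by
  intro S hSA hS
  let e := hS.natEmbedding S
  obtain ⟨x, -, hx⟩ := hA.exists_mapClusterPt_of_frequently (l := atTop) (f := fun n => (e n : Z))
    (Frequently.of_forall fun n => subset_closure (hSA (e n).2))
  exact ⟨x, mem_univ x,
    hx.isLimitPointOf (Subtype.val_injective.comp e.injective) fun n => (e n).2⟩

theorem CountablyCompactIn.exists_mapClusterPt {A : Set Z} (hA : CountablyCompactIn A univ)
    {u : ℕ → Z} (hu : ∀ n, u n ∈ A) : ∃ x, MapClusterPt x atTop u := by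
  by_cases hfin : (range u).Finite
  · obtain ⟨x, -, hx⟩ :=
      hfin.isCompact.exists_mapClusterPt_of_frequently (l := atTop)
        (Frequently.of_forall mem_range_self)
    exact ⟨x, hx⟩
  · obtain ⟨x, -, hx⟩ := hA _ (range_subset_iff.2 hu) hfin
    exact ⟨x, hx.mapClusterPt⟩

theorem CountablyCompactSpace'.exists_mapClusterPt (hZ : CountablyCompactSpace' Z) (u : ℕ → Z) :
    ∃ x, MapClusterPt x atTop u :=
  CountablyCompactIn.exists_mapClusterPt (fun S _ hS => (hZ S hS).imp fun _ hx => ⟨trivial, hx⟩)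
    fun n => mem_univ (u n)

theorem CountablyCompactIn.isBounded_image {E : Type*} [PseudoMetricSpace E] {A : Set Z}
    (hA : CountablyCompactIn A univ) {φ : Z → E} (hφ : Continuous φ) :
    Bornology.IsBounded (φ '' A) := by
  rcases A.eq_empty_or_nonempty with rfl | ⟨a, -⟩
  · simp
  rw [Metric.isBounded_iff_subset_closedBall (φ a)]
  by_contra! hunb
  have hfar : ∀ n : ℕ, ∃ z ∈ A, (n : ℝ) < dist (φ z) (φ a) := fun n => by
    simpa [subset_def] using hunb n
  choose u huA hu using hfar
  obtain ⟨z, hz⟩ := hA.exists_mapClusterPt huA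
  have hclosed : IsClosed {e | dist (φ z) (φ a) + 1 ≤ dist e (φ a)} :=
    isClosed_le continuous_const (continuous_id.dist continuous_const)
  have hev : ∀ᶠ n in atTop, φ (u n) ∈ {e | dist (φ z) (φ a) + 1 ≤ dist e (φ a)} :=
    (tendsto_natCast_atTop_atTop.eventually_ge_atTop _).mono fun n hn => hn.trans (hu n).le
  have : dist (φ z) (φ a) + 1 ≤ dist (φ z) (φ a) :=
    hclosed.mem_of_mapClusterPt (hz.continuousAt_comp hφ.continuousAt) hev
  linarith

end ClusterPoints

theorem tendsto_of_eventually_dist_lt {ι E : Type*} [PseudoMetricSpace E] {l : Filter ι}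
    {u : ι → E} {c : E} {e : ι → ℝ} (he : Tendsto e l (𝓝 0))
    (h : ∀ᶠ i in l, dist (u i) c < e i) : Tendsto u l (𝓝 c) :=
  tendsto_iff_dist_tendsto_zero.2
    (squeeze_zero' (Eventually.of_forall fun _ => dist_nonneg) (h.mono fun _ => le_of_lt) he)

theorem isCompact_closure_of_isBounded_eval {ι E : Type*} [PseudoMetricSpace E] [ProperSpace E]
    {S : Set (ι → E)} (hS : ∀ i, Bornology.IsBounded ((fun f => f i) '' S)) :
    IsCompact (closure S) :=
  (isCompact_univ_pi fun i => (hS i).isCompact_closure).of_isClosed_subset isClosed_closure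
    (closure_minimal (fun _ hf _ _ => subset_closure (mem_image_of_mem _ hf))
      (isClosed_set_pi fun _ _ => isClosed_closure))

theorem isCompact_closure_of_closure_image_val {Y : Type*} [TopologicalSpace Y] {p : Y → Prop}
    {A : Set (Subtype p)} (hA : IsCompact (closure (Subtype.val '' A)))
    (hp : ∀ y ∈ closure (Subtype.val '' A), p y) : IsCompact (closure A) := by
  have hval := IsEmbedding.subtypeVal (p := p)
  rw [hval.closure_eq_preimage_closure_image, hval.isCompact_iff,
    image_preimage_eq_of_subset fun y hy => ⟨⟨y, hp y hy⟩, rfl⟩]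
  exact hA

theorem exists_mem_forall_dist_lt_of_mem_closure {X E : Type*} [PseudoMetricSpace E]
    {F : Set (X → E)} {g : X → E} (hg : g ∈ closure F) (t : Finset X) {δ : ℝ} (hδ : 0 < δ) :
    ∃ f ∈ F, ∀ x ∈ t, dist (f x) (g x) < δ :=
  let ⟨f, hf, hfF⟩ := mem_closure_iff_nhds.1 hg _ ((eventually_all_finset t).2 fun x _ =>
    ((continuous_apply x).tendsto g).eventually (Metric.ball_mem_nhds (g x) hδ))
  ⟨f, hfF, hf⟩

theorem exists_seq_interlacing_of_mem_closure {X E : Type*} [TopologicalSpace X]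
    [PseudoMetricSpace E] {F : Set (X → E)} {g : X → E} {Y : Set X} {x₀ : X}
    (hF : ∀ f ∈ F, ContinuousAt f x₀) (hg : g ∈ closure F) (hx₀ : x₀ ∈ closure Y) :
    ∃ (f : ℕ → X → E) (y : ℕ → X), (∀ n, f n ∈ F) ∧ (∀ n, y n ∈ Y) ∧
      (∀ m, Tendsto (fun n => f n (y m)) atTop (𝓝 (g (y m)))) ∧
      Tendsto (fun n => f n x₀) atTop (𝓝 (g x₀)) ∧
      ∀ m, Tendsto (fun n => f m (y n)) atTop (𝓝 (f m x₀)) := by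
  classical
  -- a term `(k, f, y)` of the sequence is built to precision `1 / k`
  let r : ℕ × (X → E) × X → ℕ × (X → E) × X → Prop := fun a b =>
    a.1 < b.1 ∧ dist (b.2.1 a.2.2) (g a.2.2) < 1 / b.1 ∧ dist (b.2.1 x₀) (g x₀) < 1 / b.1 ∧
      dist (a.2.1 b.2.2) (a.2.1 x₀) < 1 / b.1
  obtain ⟨t, ht, hr⟩ := exists_seq_of_forall_finset_exists (fun a => a.2.1 ∈ F ∧ a.2.2 ∈ Y) r
    fun s hs => by
      set k := s.sup Prod.fst + 1
      have hk : (0 : ℝ) < 1 / k := by positivity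
      obtain ⟨f, hfF, hf⟩ :=
        exists_mem_forall_dist_lt_of_mem_closure hg (insert x₀ (s.image fun a => a.2.2)) hk
      obtain ⟨y, hyV, hyY⟩ := mem_closure_iff_nhds.1 hx₀ _ ((eventually_all_finset s).2
        fun a ha => (hF _ (hs a ha).1).eventually (Metric.ball_mem_nhds _ hk))
      refine ⟨(k, f, y), ⟨hfF, hyY⟩, fun a ha =>
        ⟨Nat.lt_succ_of_le (s.le_sup ha), ?_, ?_, hyV a ha⟩⟩
      exacts [hf _ (Finset.mem_insert_of_mem (Finset.mem_image_of_mem _ ha)),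
        hf _ (Finset.mem_insert_self _ _)]
  have hk : StrictMono fun n => (t n).1 := fun m n hmn => (hr m n hmn).1
  have he : Tendsto (fun n => 1 / ((t n).1 : ℝ)) atTop (𝓝 0) :=
    tendsto_one_div_atTop_nhds_zero_nat.comp hk.tendsto_atTop
  refine ⟨fun n => (t n).2.1, fun n => (t n).2.2, fun n => (ht n).1, fun n => (ht n).2,
    fun m => ?_, ?_, fun m => ?_⟩
  · exact tendsto_of_eventually_dist_lt he
      ((eventually_gt_atTop m).mono fun n hn => (hr m n hn).2.1)
  · exact tendsto_of_eventually_dist_lt he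
      ((eventually_gt_atTop 0).mono fun n hn => (hr 0 n hn).2.2.1)
  · exact tendsto_of_eventually_dist_lt he
      ((eventually_gt_atTop m).mono fun n hn => (hr m n hn).2.2.2)

theorem Cp.continuous_eval {X : Type*} [TopologicalSpace X] (x : X) :
    Continuous fun f : Cp X => f.1 x :=
  (continuous_apply x).comp continuous_subtype_val

theorem Cp.continuous_of_mem_closure_image_val {X : Type*} [TopologicalSpace X]
    (hX : CountablyCompactSpace' X) {A : Set (Cp X)} (hA : CountablyCompactIn A univ)
    {g : X → ℝ} (hg : g ∈ closure (Subtype.val '' A)) : Continuous g := by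
  refine continuous_iff_continuousAt.2 fun x₀ => by_contra fun hg₀ => ?_
  obtain ⟨ε, hε, hx₀⟩ : ∃ ε > 0, x₀ ∈ closure {x | ε ≤ dist (g x) (g x₀)} := by
    simpa [ContinuousAt, Metric.tendsto_nhds, mem_closure_iff_frequently] using hg₀
  obtain ⟨f, y, hfA, hyY, hf_y, hf_x₀, hy_f⟩ :=
    exists_seq_interlacing_of_mem_closure (by rintro _ ⟨φ, -, rfl⟩; exact φ.2.continuousAt)
      hg hx₀
  choose φ hφA hφf using hfA
  obtain rfl : (fun n => (φ n).1) = f := funext hφf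
  obtain ⟨h, hh⟩ := hA.exists_mapClusterPt hφA
  obtain ⟨z, hz⟩ := hX.exists_mapClusterPt y
  have hh_eval (p : X) : MapClusterPt (h.1 p) atTop fun n => (φ n).1 p :=
    hh.continuousAt_comp (continuous_eval p).continuousAt
  have h_y (m : ℕ) : h.1 (y m) = g (y m) := (hh_eval (y m)).eq_of_tendsto (hf_y m)
  have h_x₀ : h.1 x₀ = g x₀ := (hh_eval x₀).eq_of_tendsto hf_x₀
  have φ_z (m : ℕ) : (φ m).1 z = (φ m).1 x₀ :=
    (hz.continuousAt_comp (φ m).2.continuousAt).eq_of_tendsto (hy_f m)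
  have h_z : h.1 z = h.1 x₀ :=
    (isClosed_eq (continuous_eval z) (continuous_eval x₀)).mem_of_mapClusterPt hh
      (Eventually.of_forall φ_z)
  have hfar : ε ≤ dist (h.1 z) (g x₀) :=
    (isClosed_le continuous_const (continuous_id.dist continuous_const)).mem_of_mapClusterPt
      (hz.continuousAt_comp h.2.continuousAt) (Eventually.of_forall fun n => by
        simpa [h_y] using hyY n)
  rw [h_z, h_x₀, dist_self] at hfar
  exact hε.not_ge hfar

theorem grothendieck_theorem_general
    {X : Type*} [TopologicalSpace X]
    (hX : CountablyCompactSpace' X) (A : Set (Cp X)) :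
    IsCompact (closure A) ↔ CountablyCompactIn A (Set.univ : Set (Cp X)) := by
  refine ⟨CountablyCompactIn.of_isCompact_closure, fun hA => ?_⟩
  refine isCompact_closure_of_closure_image_val (isCompact_closure_of_isBounded_eval fun x => ?_)
    fun g hg => Cp.continuous_of_mem_closure_image_val hX hA hg
  convert hA.isBounded_image (Cp.continuous_eval x) using 1
  exact image_image _ _ _

/-- Grothendieck's Theorem: For a countably compact space `X`, a subset of
`Cp(X)` has compact closure iff it is countably compact in `Cp(X)`. -/
theorem grothendieck_theorem
    {X : Type*} [TopologicalSpace X] [CompletelyRegularSpace X] [T2Space X]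
    (hX : CountablyCompactSpace' X) (A : Set (Cp X)) :
    IsCompact (closure A) ↔ CountablyCompactIn A (Set.univ : Set (Cp X)) :=
  grothendieck_theorem_general hX A
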